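/- For every palette 𝒫 and every ν>0 there exists β∈(0,1] such that for every weighting x of 𝒫 there exist colours a,b∈Φ(𝒫) with x_a ≥ β, x_b ≥ β and λ^{a,b}_𝒫(x) ≤ Λ^{ee}_𝒫 + ν. -/
import Mathlib


open Finset

/-- A 3-uniform hypergraph: a finite vertex set (of naturals) together with a set of
3-element subsets of it as edges. -/
structure ThreeGraph where
  verts : Finset ℕ
  edges : Finset (Finset ℕ)
  edge_sub : ∀ e ∈ edges, e ⊆ verts
  edge_card : ∀ e ∈ edges, e.card = 3

/-- `F` occurs as a subhypergraph of `H`. -/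
def IsSubhypergraph (F H : ThreeGraph) : Prop :=
  ∃ f : ℕ → ℕ, Set.InjOn f ↑F.verts ∧ (∀ v ∈ F.verts, f v ∈ H.verts) ∧
    ∀ e ∈ F.edges, e.image f ∈ H.edges

noncomputable section

/-- Number of triples `(x,y,z) ∈ X × Y × Z` with `{x,y,z}` an edge of `H`. -/
def eVVV (H : ThreeGraph) (X Y Z : Finset ℕ) : ℕ :=
  ((X ×ˢ Y ×ˢ Z).filter fun p => ({p.1, p.2.1, p.2.2} : Finset ℕ) ∈ H.edges).card

/-- `H` is `(d,η,▽)`-dense. -/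
def IsDenseVVV (H : ThreeGraph) (d η : ℝ) : Prop :=
  ∀ X Y Z : Finset ℕ, X ⊆ H.verts → Y ⊆ H.verts → Z ⊆ H.verts →
    (eVVV H X Y Z : ℝ) ≥ d * X.card * Y.card * Z.card - η * (H.verts.card : ℝ) ^ 3

/-- Number of ordered triples `(x,y,z)` with `x ∈ X`, `{y,z} ∈ P` and `{x,y,z}` an edge. -/
def eEV (H : ThreeGraph) (X : Finset ℕ) (P : Finset (Finset ℕ)) : ℕ :=
  ((X ×ˢ H.verts ×ˢ H.verts).filter fun p =>
    ({p.2.1, p.2.2} : Finset ℕ) ∈ P ∧ ({p.1, p.2.1, p.2.2} : Finset ℕ) ∈ H.edges).card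

/-- `H` is `(d,η,e↦v)`-dense. -/
def IsDenseEV (H : ThreeGraph) (d η : ℝ) : Prop :=
  ∀ (X : Finset ℕ) (P : Finset (Finset ℕ)), X ⊆ H.verts →
    (∀ p ∈ P, p ⊆ H.verts ∧ p.card = 2) →
    (eEV H X P : ℝ) ≥ d * X.card * P.card - η * (H.verts.card : ℝ) ^ 3

/-- `K_{ee}(P,Q)`: ordered triples `(x,y,z)` with `{x,y} ∈ P` and `{y,z} ∈ Q`. -/
def KEE (H : ThreeGraph) (P Q : Finset (Finset ℕ)) : Finset (ℕ × ℕ × ℕ) :=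
  (H.verts ×ˢ H.verts ×ˢ H.verts).filter fun p =>
    ({p.1, p.2.1} : Finset ℕ) ∈ P ∧ ({p.2.1, p.2.2} : Finset ℕ) ∈ Q

/-- Number of triples in `K_{ee}(P,Q)` forming an edge of `H`. -/
def eEE (H : ThreeGraph) (P Q : Finset (Finset ℕ)) : ℕ :=
  ((KEE H P Q).filter fun p => ({p.1, p.2.1, p.2.2} : Finset ℕ) ∈ H.edges).card

/-- `H` is `(d,η,ee)`-dense. -/
def IsDenseEE (H : ThreeGraph) (d η : ℝ) : Prop :=
  ∀ P Q : Finset (Finset ℕ),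
    (∀ p ∈ P, p ⊆ H.verts ∧ p.card = 2) → (∀ q ∈ Q, q ⊆ H.verts ∧ q.card = 2) →
    (eEE H P Q : ℝ) ≥ d * (KEE H P Q).card - η * (H.verts.card : ℝ) ^ 3

/-- The uniform Turán density `π_▽(𝓕)` of a family `𝓕` of 3-graphs. -/
def piVVV (𝓕 : Set ThreeGraph) : ℝ :=
  sSup {d : ℝ | 0 ≤ d ∧ d ≤ 1 ∧ ∀ η : ℝ, 0 < η → ∀ n : ℕ,
    ∃ H : ThreeGraph, n ≤ H.verts.card ∧ (∀ F ∈ 𝓕, ¬ IsSubhypergraph F H) ∧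
      IsDenseVVV H d η}

/-- The uniform Turán density `π_{e↦v}(𝓕)` of a family `𝓕` of 3-graphs. -/
def piEV (𝓕 : Set ThreeGraph) : ℝ :=
  sSup {d : ℝ | 0 ≤ d ∧ d ≤ 1 ∧ ∀ η : ℝ, 0 < η → ∀ n : ℕ,
    ∃ H : ThreeGraph, n ≤ H.verts.card ∧ (∀ F ∈ 𝓕, ¬ IsSubhypergraph F H) ∧
      IsDenseEV H d η}

/-- The uniform Turán density `π_{ee}(𝓕)` of a family `𝓕` of 3-graphs. -/
def piEE (𝓕 : Set ThreeGraph) : ℝ :=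
  sSup {d : ℝ | 0 ≤ d ∧ d ≤ 1 ∧ ∀ η : ℝ, 0 < η → ∀ n : ℕ,
    ∃ H : ThreeGraph, n ≤ H.verts.card ∧ (∀ F ∈ 𝓕, ¬ IsSubhypergraph F H) ∧
      IsDenseEE H d η}

/-- A palette: a finite set of ordered triples of natural numbers (colours). -/
abbrev Palette := Finset (ℕ × ℕ × ℕ)

/-- The set of colours `Φ(𝒫)` of a palette. -/
def palColours (P : Palette) : Finset ℕ :=
  P.image (·.1) ∪ P.image (·.2.1) ∪ P.image (·.2.2)

/-- A weighting of a palette: nonnegative weights on the colours summing to 1. -/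
def IsWeighting (P : Palette) (x : ℕ → ℝ) : Prop :=
  (∀ a ∈ palColours P, 0 ≤ x a) ∧ ∑ a ∈ palColours P, x a = 1

/-- `λ^▽_𝒫(x) = Σ_{(a,b,c) ∈ 𝒫} x_a x_b x_c`. -/
def lamVVV (P : Palette) (x : ℕ → ℝ) : ℝ :=
  ∑ p ∈ P, x p.1 * x p.2.1 * x p.2.2

/-- The palette Lagrangian `Λ^▽_𝒫`. -/
def LambdaVVV (P : Palette) : ℝ :=
  sSup {l : ℝ | ∃ x : ℕ → ℝ, IsWeighting P x ∧ l = lamVVV P x}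

/-- The ordered degree Lagrangian `λ^a_𝒫(x)`. -/
def lamDeg (P : Palette) (a : ℕ) (x : ℕ → ℝ) : ℝ :=
  min (min (∑ p ∈ P.filter (fun p => p.1 = a), x p.2.1 * x p.2.2)
           (∑ p ∈ P.filter (fun p => p.2.1 = a), x p.1 * x p.2.2))
      (∑ p ∈ P.filter (fun p => p.2.2 = a), x p.1 * x p.2.1)

/-- `λ^{e↦v}_𝒫(x)`: minimum of `λ^a_𝒫(x)` over colours `a` with positive weight. -/
def lamEV (P : Palette) (x : ℕ → ℝ) : ℝ :=
  sInf {l : ℝ | ∃ a ∈ palColours P, 0 < x a ∧ l = lamDeg P a x}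

/-- The palette Lagrangian `Λ^{e↦v}_𝒫`. -/
def LambdaEV (P : Palette) : ℝ :=
  sSup {l : ℝ | ∃ x : ℕ → ℝ, IsWeighting P x ∧ l = lamEV P x}

/-- The ordered codegree Lagrangian `λ^{a,b}_𝒫(x)`. -/
def lamCodeg (P : Palette) (a b : ℕ) (x : ℕ → ℝ) : ℝ :=
  min (min (min (∑ p ∈ P.filter (fun p => p.1 = a ∧ p.2.1 = b), x p.2.2)
                (∑ p ∈ P.filter (fun p => p.1 = b ∧ p.2.1 = a), x p.2.2))
           (min (∑ p ∈ P.filter (fun p => p.1 = a ∧ p.2.2 = b), x p.2.1)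
                (∑ p ∈ P.filter (fun p => p.1 = b ∧ p.2.2 = a), x p.2.1)))
      (min (∑ p ∈ P.filter (fun p => p.2.1 = a ∧ p.2.2 = b), x p.1)
           (∑ p ∈ P.filter (fun p => p.2.1 = b ∧ p.2.2 = a), x p.1))

/-- `λ^{ee}_𝒫(x)`: minimum of `λ^{a,b}_𝒫(x)` over colours `a,b` with positive weight. -/
def lamEE (P : Palette) (x : ℕ → ℝ) : ℝ :=
  sInf {l : ℝ | ∃ a ∈ palColours P, ∃ b ∈ palColours P, 0 < x a * x b ∧ l = lamCodeg P a b x}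

/-- The palette Lagrangian `Λ^{ee}_𝒫`. -/
def LambdaEE (P : Palette) : ℝ :=
  sSup {l : ℝ | ∃ x : ℕ → ℝ, IsWeighting P x ∧ l = lamEE P x}

/-- A 3-graph `H` satisfies a palette `P`: there is an ordering of the vertices (an
injection `ord` into `ℕ`) and a colouring `φ` of the pairs of vertices with colours in
`Φ(P)` such that the ordered shadow of every edge is a triple of the palette. -/
def Satisfies (H : ThreeGraph) (P : Palette) : Prop :=
  ∃ (ord : ℕ → ℕ) (φ : Finset ℕ → ℕ),
    Set.InjOn ord ↑H.verts ∧
    (∀ u ∈ H.verts, ∀ v ∈ H.verts, u ≠ v → φ {u, v} ∈ palColours P) ∧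
    ∀ u v w : ℕ, ({u, v, w} : Finset ℕ) ∈ H.edges →
      ord u < ord v → ord v < ord w →
      (φ {u, v}, φ {v, w}, φ {u, w}) ∈ P

/-- Delete a set of edges from a 3-graph. -/
def ThreeGraph.deleteEdges (H : ThreeGraph) (R : Finset (Finset ℕ)) : ThreeGraph where
  verts := H.verts
  edges := H.edges \ R
  edge_sub := fun e he => H.edge_sub e (Finset.mem_sdiff.mp he).1
  edge_card := fun e he => H.edge_card e (Finset.mem_sdiff.mp he).1

/-- `H` α-almost satisfies `P`: one can remove at most `α·|V(H)|³` edges so that the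
resulting 3-graph satisfies `P`. -/
def AlmostSatisfies (H : ThreeGraph) (P : Palette) (α : ℝ) : Prop :=
  ∃ R ⊆ H.edges, (R.card : ℝ) ≤ α * (H.verts.card : ℝ) ^ 3 ∧
    Satisfies (H.deleteEdges R) P

/-- The Lagrange polynomial `λ_F(x) = 3! Σ_{e ∈ E(F)} Π_{v ∈ e} x_v` of a 3-graph. -/
def lagrangePoly (F : ThreeGraph) (x : ℕ → ℝ) : ℝ :=
  6 * ∑ e ∈ F.edges, ∏ v ∈ e, x v

/-- The Lagrangian `Λ_F` of a 3-graph: the supremum of the Lagrange polynomial over the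
standard simplex on the vertices. -/
def lagrangian (F : ThreeGraph) : ℝ :=
  sSup {l : ℝ | ∃ x : ℕ → ℝ, (∀ v ∈ F.verts, 0 ≤ x v ∧ x v ≤ 1) ∧
    (∑ v ∈ F.verts, x v = 1) ∧ l = lagrangePoly F x}

end


lemma pal_mem1 {P : Palette} {p : ℕ × ℕ × ℕ} (hp : p ∈ P) : p.1 ∈ palColours P := by
  simp only [palColours, mem_union, mem_image]
  exact Or.inl (Or.inl ⟨p, hp, rfl⟩)

lemma pal_mem2 {P : Palette} {p : ℕ × ℕ × ℕ} (hp : p ∈ P) : p.2.1 ∈ palColours P := by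
  simp only [palColours, mem_union, mem_image]
  exact Or.inl (Or.inr ⟨p, hp, rfl⟩)

lemma pal_mem3 {P : Palette} {p : ℕ × ℕ × ℕ} (hp : p ∈ P) : p.2.2 ∈ palColours P := by
  simp only [palColours, mem_union, mem_image]
  exact Or.inr ⟨p, hp, rfl⟩

lemma lamCodeg_nonneg (P : Palette) (a b : ℕ) (y : ℕ → ℝ)
    (hy : ∀ c ∈ palColours P, 0 ≤ y c) : 0 ≤ lamCodeg P a b y := by
  unfold lamCodeg
  refine le_min (le_min (le_min ?_ ?_) (le_min ?_ ?_)) (le_min ?_ ?_) <;>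
    refine Finset.sum_nonneg fun p hp => ?_
  · exact hy _ (pal_mem3 (mem_filter.mp hp).1)
  · exact hy _ (pal_mem3 (mem_filter.mp hp).1)
  · exact hy _ (pal_mem2 (mem_filter.mp hp).1)
  · exact hy _ (pal_mem2 (mem_filter.mp hp).1)
  · exact hy _ (pal_mem1 (mem_filter.mp hp).1)
  · exact hy _ (pal_mem1 (mem_filter.mp hp).1)

lemma lamCodeg_le_card (P : Palette) (a b : ℕ) (y : ℕ → ℝ)
    (hy : ∀ c ∈ palColours P, y c ≤ 1) : lamCodeg P a b y ≤ P.card := by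
  unfold lamCodeg
  refine le_trans (min_le_left _ _) (le_trans (min_le_left _ _)
    (le_trans (min_le_left _ _) ?_))
  calc ∑ p ∈ P.filter (fun p => p.1 = a ∧ p.2.1 = b), y p.2.2
      ≤ ∑ _p ∈ P.filter (fun p => p.1 = a ∧ p.2.1 = b), (1 : ℝ) :=
        Finset.sum_le_sum fun p hp => hy _ (pal_mem3 (mem_filter.mp hp).1)
    _ = (P.filter (fun p => p.1 = a ∧ p.2.1 = b)).card := by simp
    _ ≤ P.card := by exact_mod_cast Finset.card_filter_le _ _

lemma exists_pos_colour (P : Palette) (y : ℕ → ℝ) (hy : IsWeighting P y) :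
    ∃ a ∈ palColours P, 0 < y a := by
  by_contra h
  push_neg at h
  have : ∑ a ∈ palColours P, y a = 0 :=
    Finset.sum_eq_zero fun a ha => le_antisymm (h a ha) (hy.1 a ha)
  rw [hy.2] at this; norm_num at this

lemma lamEE_mem_setNonempty (P : Palette) (y : ℕ → ℝ) (hy : IsWeighting P y) :
    {l : ℝ | ∃ a ∈ palColours P, ∃ b ∈ palColours P, 0 < y a * y b ∧
      l = lamCodeg P a b y}.Nonempty := by
  obtain ⟨a, ha, hpos⟩ := exists_pos_colour P y hy
  exact ⟨lamCodeg P a a y, a, ha, a, ha, mul_pos hpos hpos, rfl⟩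

lemma lamEE_bddBelow (P : Palette) (y : ℕ → ℝ) (hy : ∀ c ∈ palColours P, 0 ≤ y c) :
    BddBelow {l : ℝ | ∃ a ∈ palColours P, ∃ b ∈ palColours P, 0 < y a * y b ∧
      l = lamCodeg P a b y} := by
  refine ⟨0, fun l hl => ?_⟩
  obtain ⟨a, _, b, _, _, rfl⟩ := hl
  exact lamCodeg_nonneg P a b y hy

lemma weighting_le_one (P : Palette) (y : ℕ → ℝ) (hy : IsWeighting P y) :
    ∀ c ∈ palColours P, y c ≤ 1 := by
  intro c hc
  calc y c ≤ ∑ a ∈ palColours P, y a := Finset.single_le_sum hy.1 hc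
    _ = 1 := hy.2

lemma lamEE_le_card (P : Palette) (y : ℕ → ℝ) (hy : IsWeighting P y) :
    lamEE P y ≤ P.card := by
  obtain ⟨a, ha, hpos⟩ := exists_pos_colour P y hy
  have hmem : lamCodeg P a a y ∈ {l : ℝ | ∃ a ∈ palColours P, ∃ b ∈ palColours P,
      0 < y a * y b ∧ l = lamCodeg P a b y} := ⟨a, ha, a, ha, mul_pos hpos hpos, rfl⟩
  unfold lamEE
  exact le_trans (csInf_le (lamEE_bddBelow P y hy.1) hmem)
    (lamCodeg_le_card P a a y (weighting_le_one P y hy))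

lemma LambdaEE_bddAbove (P : Palette) :
    BddAbove {l : ℝ | ∃ x : ℕ → ℝ, IsWeighting P x ∧ l = lamEE P x} := by
  refine ⟨P.card, fun l hl => ?_⟩
  obtain ⟨y, hy, rfl⟩ := hl
  exact lamEE_le_card P y hy

lemma sum_comp_le (P : Palette) (F : Finset (ℕ × ℕ × ℕ)) (hF : F ⊆ P)
    (g : ℕ × ℕ × ℕ → ℕ) (hg : ∀ p ∈ P, g p ∈ palColours P)
    (y z : ℕ → ℝ) (ε : ℝ) (hε : 0 ≤ ε)
    (h : ∀ c ∈ palColours P, y c ≤ z c + ε) :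
    ∑ p ∈ F, y (g p) ≤ (∑ p ∈ F, z (g p)) + P.card * ε := by
  calc ∑ p ∈ F, y (g p) ≤ ∑ p ∈ F, (z (g p) + ε) :=
        Finset.sum_le_sum fun p hp => h _ (hg p (hF hp))
    _ = (∑ p ∈ F, z (g p)) + F.card * ε := by
        rw [Finset.sum_add_distrib, Finset.sum_const, nsmul_eq_mul]
    _ ≤ (∑ p ∈ F, z (g p)) + P.card * ε := by
        have : (F.card : ℝ) ≤ P.card := by exact_mod_cast Finset.card_le_card hF
        nlinarith

lemma min_le_min_add {u v u' v' e : ℝ} (h1 : u ≤ u' + e) (h2 : v ≤ v' + e) :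
    min u v ≤ min u' v' + e := by
  rcases le_total u' v' with h | h
  · rw [min_eq_left h]; exact (min_le_left _ _).trans h1
  · rw [min_eq_right h]; exact (min_le_right _ _).trans h2

lemma lamCodeg_le_add (P : Palette) (a b : ℕ) (y z : ℕ → ℝ) (ε : ℝ) (hε : 0 ≤ ε)
    (h : ∀ c ∈ palColours P, y c ≤ z c + ε) :
    lamCodeg P a b y ≤ lamCodeg P a b z + P.card * ε := by
  unfold lamCodeg
  refine min_le_min_add (min_le_min_add (min_le_min_add ?_ ?_) (min_le_min_add ?_ ?_))
    (min_le_min_add ?_ ?_) <;>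
  · first
    | exact sum_comp_le P _ (Finset.filter_subset _ _) (fun p => p.2.2)
        (fun p hp => pal_mem3 hp) y z ε hε h
    | exact sum_comp_le P _ (Finset.filter_subset _ _) (fun p => p.2.1)
        (fun p hp => pal_mem2 hp) y z ε hε h
    | exact sum_comp_le P _ (Finset.filter_subset _ _) (fun p => p.1)
        (fun p hp => pal_mem1 hp) y z ε hε h

lemma lamEE_exists_pair (P : Palette) (y : ℕ → ℝ) (hy : IsWeighting P y)
    (ε : ℝ) (hε : 0 < ε) :
    ∃ a ∈ palColours P, ∃ b ∈ palColours P, 0 < y a * y b ∧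
      lamCodeg P a b y < lamEE P y + ε := by
  unfold lamEE
  obtain ⟨l, hl, hlt⟩ := Real.lt_sInf_add_pos (lamEE_mem_setNonempty P y hy) hε
  obtain ⟨a, ha, b, hb, hab, rfl⟩ := hl
  exact ⟨a, ha, b, hb, hab, hlt⟩

/-- For every palette 𝒫 and ν > 0 there is β ∈ (0,1] so that every
weighting x admits colours a, b with x_a, x_b ≥ β and λ^{a,b}_𝒫(x) ≤ Λ^{ee}_𝒫 + ν. -/
theorem popular_colour_EE (P : Palette) (ν : ℝ) (hν : 0 < ν) :
    ∃ β : ℝ, 0 < β ∧ β ≤ 1 ∧ ∀ x : ℕ → ℝ, IsWeighting P x →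
      ∃ a ∈ palColours P, ∃ b ∈ palColours P,
        β ≤ x a ∧ β ≤ x b ∧ lamCodeg P a b x ≤ LambdaEE P + ν := by
  rcases Finset.eq_empty_or_nonempty (palColours P) with hemp | hne
  · refine ⟨1, one_pos, le_refl 1, fun x hx => absurd hx.2 ?_⟩
    rw [hemp]; simp
  · set K : ℝ := (P.card : ℝ) with hK
    have hK0 : (0:ℝ) ≤ K := by positivity
    set m : ℝ := ((palColours P).card : ℝ) with hm
    have hm1 : (1:ℝ) ≤ m := by
      have : 1 ≤ (palColours P).card := hne.card_pos
      rw [hm]; exact_mod_cast this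
    set β : ℝ := min (1/m) (ν / (2*(K+1))) with hβdef
    have hβpos : 0 < β := lt_min (by positivity) (by positivity)
    have hβ1 : β ≤ 1 := (min_le_left _ _).trans (by
      rw [div_le_one (by linarith)]; exact hm1)
    have hKβ : K * β ≤ ν / 2 := by
      have h1 : β ≤ ν / (2 * (K + 1)) := min_le_right _ _
      have h2 : (0:ℝ) < 2 * (K + 1) := by positivity
      rw [le_div_iff₀ h2] at h1
      nlinarith [hβpos.le]
    refine ⟨β, hβpos, hβ1, fun x hx => ?_⟩
    -- some colour has weight at least β
    have hex : ∃ a ∈ palColours P, β ≤ x a := by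
      by_contra h
      push_neg at h
      have hlt : ∀ a ∈ palColours P, x a < 1/m := fun a ha =>
        lt_of_lt_of_le (h a ha) (min_le_left _ _)
      have hsum : ∑ a ∈ palColours P, x a < ∑ _a ∈ palColours P, 1/m :=
        Finset.sum_lt_sum_of_nonempty hne hlt
      rw [hx.2, Finset.sum_const, nsmul_eq_mul] at hsum
      rw [hm] at hsum
      rw [mul_one_div, div_self (by positivity)] at hsum
      exact lt_irrefl _ hsum
    set S : Finset ℕ := (palColours P).filter (fun a => β ≤ x a) with hS
    have hSsub : S ⊆ palColours P := Finset.filter_subset _ _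
    set σ : ℝ := ∑ a ∈ S, x a with hσ
    obtain ⟨a1, ha1, ha1β⟩ := hex
    have ha1S : a1 ∈ S := Finset.mem_filter.mpr ⟨ha1, ha1β⟩
    have hσpos : 0 < σ := lt_of_lt_of_le hβpos
      (ha1β.trans (Finset.single_le_sum (fun a ha => hx.1 a (hSsub ha)) ha1S))
    have hσle1 : σ ≤ 1 := by
      rw [hσ, ← hx.2]
      exact Finset.sum_le_sum_of_subset_of_nonneg hSsub (fun a ha _ => hx.1 a ha)
    set x' : ℕ → ℝ := fun c => if c ∈ S then x c / σ else 0 with hx'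
    have hx'nonneg : ∀ c, 0 ≤ x' c := by
      intro c
      by_cases h : c ∈ S
      · simp only [hx', if_pos h]
        exact div_nonneg (hx.1 c (hSsub h)) hσpos.le
      · simp only [hx', if_neg h]; exact le_refl 0
    have hx'weight : IsWeighting P x' := by
      refine ⟨fun a _ => hx'nonneg a, ?_⟩
      calc ∑ a ∈ palColours P, x' a
          = ∑ a ∈ palColours P ∩ S, x a / σ := by
            rw [hx']; exact Finset.sum_ite_mem _ _ _
        _ = ∑ a ∈ S, x a / σ := by rw [Finset.inter_eq_right.mpr hSsub]
        _ = σ / σ := by rw [← Finset.sum_div]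
        _ = 1 := div_self hσpos.ne'
    have hle : lamEE P x' ≤ LambdaEE P :=
      le_csSup (LambdaEE_bddAbove P) ⟨x', hx'weight, rfl⟩
    obtain ⟨a, ha, b, hb, habpos, hlt⟩ :=
      lamEE_exists_pair P x' hx'weight (ν/2) (half_pos hν)
    have hx'a : 0 < x' a := by
      rcases mul_pos_iff.mp habpos with ⟨h, _⟩ | ⟨h, _⟩
      · exact h
      · linarith [hx'nonneg a]
    have hx'b : 0 < x' b := by
      rcases mul_pos_iff.mp habpos with ⟨_, h⟩ | ⟨_, h⟩
      · exact h
      · linarith [hx'nonneg b]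
    have haS : a ∈ S := by
      by_contra h
      simp only [hx', if_neg h] at hx'a
      exact lt_irrefl 0 hx'a
    have hbS : b ∈ S := by
      by_contra h
      simp only [hx', if_neg h] at hx'b
      exact lt_irrefl 0 hx'b
    have haβ : β ≤ x a := (Finset.mem_filter.mp haS).2
    have hbβ : β ≤ x b := (Finset.mem_filter.mp hbS).2
    -- pointwise comparison
    have hpt : ∀ c ∈ palColours P, x c ≤ x' c + β := by
      intro c hc
      by_cases h : c ∈ S
      · have hxc : 0 ≤ x c := hx.1 c hc
        have hdiv : x c ≤ x c / σ := by
          rw [le_div_iff₀ hσpos]; nlinarith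
        simp only [hx', if_pos h]
        linarith [hβpos.le]
      · have hlt2 : x c < β := by
          by_contra hcon
          push_neg at hcon
          exact h (Finset.mem_filter.mpr ⟨hc, hcon⟩)
        simp only [hx', if_neg h]
        linarith
    have hcomp := lamCodeg_le_add P a b x x' β hβpos.le hpt
    refine ⟨a, ha, b, hb, haβ, hbβ, ?_⟩
    calc lamCodeg P a b x ≤ lamCodeg P a b x' + K * β := hcomp
      _ ≤ (LambdaEE P + ν/2) + ν/2 := by linarith
      _ = LambdaEE P + ν := by ring
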